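/- arXiv:2311.10180 — 7 statements merged into one kernel-verified Lean document; each statement's English description precedes it below -/
import Mathlib

section
/- (Hivert) Let w be a word of length n over the positive integers and let χ(w) be its weakly increasing rearrangement. For every permutation τ of {1,…,n} such that w(p) = χ(w)(τ(p)) for all p ∈ {1,…,n}, the inversion set of st(w) is contained in the inversion set of τ. In other words, st(w) is the smallest permutation for the right weak order (inversion-set containment) among permutations τ with w = χ(w)·τ. -/
/-! An inversion `(i, j)` of `st(w)` is a strict descent `w(j) < w(i)`. Since `χ(w)` is weakly
increasing, `w = χ(w) · τ` makes `p ↦ w(p)` monotone in `τ(p)`, so `τ(i) ≤ τ(j)` would give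
`w(i) ≤ w(j)`. -/

/-- Increment by `α` every letter strictly greater than `β`. -/
def Inc (α β : ℕ) (u : List ℕ) : List ℕ := u.map fun a => if β < a then a + α else a

/-- Maximal letter of a word. -/
def maxLetter (v : List ℕ) : ℕ := v.foldr max 0

/-- A packed word whose letter set is exactly `{1, …, k}`. -/
def IsPackedOn (k : ℕ) (w : List ℕ) : Prop := w.toFinset = Finset.Icc 1 k

/-- A packed word. -/
def IsPacked (w : List ℕ) : Prop := ∃ k, IsPackedOn k w

/-- A permutation of `{1, …, n}` identified with the word `σ(1) ⋯ σ(n)`. -/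
def IsPermWord (n : ℕ) (σ : List ℕ) : Prop :=
  σ.length = n ∧ σ.toFinset = Finset.Icc 1 n

/-- `σ` is the standardization of `w`: a permutation word of `{1, …, n}` with the same
inversions as `w` (0-based indexing). -/
def IsStdOf (w σ : List ℕ) : Prop :=
  IsPermWord w.length σ ∧
    ∀ i j : ℕ, i < j → j < w.length →
      (w.getD j 0 < w.getD i 0 ↔ σ.getD j 0 < σ.getD i 0)

/-- The weakly increasing rearrangement (composition type) of a word. -/
def chi (w : List ℕ) : List ℕ := List.insertionSort (· ≤ ·) w

/-- Right composition `u ∘→_i v` of packed words (`i` is 1-based). -/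
def rightComp (u : List ℕ) (i : ℕ) (v : List ℕ) : List ℕ :=
  Inc (maxLetter v - 1) (u.getD (i - 1) 0) (u.take (i - 1))
    ++ Inc (u.getD (i - 1) 0 - 1) 0 v
    ++ Inc (maxLetter v - 1) (u.getD (i - 1) 0 - 1) (u.drop i)

/-- Left composition `u ∘←_i v` of packed words: replace in `Inc (m-1) i u` every
occurrence of the letter `i` by the word `Inc (i-1) 0 v`, where `m` is the maximal
letter of `v`. -/
def leftComp (u : List ℕ) (i : ℕ) (v : List ℕ) : List ℕ :=
  u.flatMap fun a =>
    if a = i then Inc (i - 1) 0 v else [if i < a then a + (maxLetter v - 1) else a]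

/-- Block composition `B_i(α, β)` of permutation words (`i` is 1-based, `β` a permutation
of `{1, …, m}` with `m = β.length`). -/
def blockComp (α : List ℕ) (i : ℕ) (β : List ℕ) : List ℕ :=
  Inc (β.length - 1) (α.getD (i - 1) 0) (α.take (i - 1))
    ++ Inc (α.getD (i - 1) 0 - 1) 0 β
    ++ Inc (β.length - 1) (α.getD (i - 1) 0 - 1) (α.drop i)

/-- The inverse of a permutation word. -/
def invWord (σ : List ℕ) : List ℕ :=
  (List.range σ.length).map fun p => σ.idxOf (p + 1) + 1

/-- The right action of a permutation word `σ` of `{1, …, n}` on a packed word with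
letter set `{1, …, n}`: the `p`-th letter of `u · σ` is `σ⁻¹(u(p))`. -/
def permAct (u σ : List ℕ) : List ℕ := u.map fun a => (invWord σ).getD (a - 1) 0

/-- The identity permutation word of `{1, …, m}`. -/
def idWord (m : ℕ) : List ℕ := (List.range m).map (· + 1)

/-- `First k u`: keep only the `k` leftmost occurrences of each letter of `u`. -/
def First (k : ℕ) (u : List ℕ) : List ℕ :=
  (List.range u.length).filterMap fun p =>
    if (u.take p).count (u.getD p 0) < k then some (u.getD p 0) else none


lemma IsPermWord.getD_mem_Icc {n : ℕ} {τ : List ℕ} (hτ : IsPermWord n τ) {p : ℕ} (hp : p < n) :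
    τ.getD p 0 ∈ Finset.Icc 1 n := by
  rw [← hτ.2, List.mem_toFinset, List.getD_eq_getElem _ _ (hτ.1 ▸ hp)]
  exact List.getElem_mem _

lemma List.Pairwise.getD_le_getD {α : Type*} [Preorder α] {l : List α}
    (hl : l.Pairwise (· ≤ ·)) (d : α) {a b : ℕ} (hab : a ≤ b) (hb : b < l.length) :
    l.getD a d ≤ l.getD b d := by
  rw [List.getD_eq_getElem _ _ (hab.trans_lt hb), List.getD_eq_getElem _ _ hb]
  exact hl.rel_get_of_le (a := ⟨a, hab.trans_lt hb⟩) (b := ⟨b, hb⟩) hab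

lemma chi_getD_le_getD (w : List ℕ) {a b : ℕ} (hab : a ≤ b) (hb : b < w.length) :
    (chi w).getD a 0 ≤ (chi w).getD b 0 :=
  (List.pairwise_insertionSort _ w).getD_le_getD 0 hab (by rwa [List.length_insertionSort])

theorem std_minimal_for_right_weak_order_general (w σ τ : List ℕ)
    (hσ : IsStdOf w σ) (hτ : IsPermWord w.length τ)
    (hfact : ∀ p < w.length, w.getD p 0 = (chi w).getD (τ.getD p 0 - 1) 0) :
    ∀ i j : ℕ, i < j → j < w.length →
      σ.getD j 0 < σ.getD i 0 → τ.getD j 0 < τ.getD i 0 := by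
  intro i j hij hj hσij
  have hwij : w.getD j 0 < w.getD i 0 := (hσ.2 i j hij hj).mpr hσij
  by_contra! hτij
  have hτi := Finset.mem_Icc.mp (hτ.getD_mem_Icc (hij.trans hj))
  have hτj := Finset.mem_Icc.mp (hτ.getD_mem_Icc hj)
  have hwle : w.getD i 0 ≤ w.getD j 0 := by
    rw [hfact i (hij.trans hj), hfact j hj]
    exact chi_getD_le_getD w (by omega) (by omega)
  omega

/-- Hivert: `st(w)` is the smallest permutation `τ` (for the right weak order, i.e.
inversion-set containment) such that `w = χ(w) · τ`. -/
theorem std_minimal_for_right_weak_order (w σ τ : List ℕ) (hw : ∀ a ∈ w, 0 < a)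
    (hσ : IsStdOf w σ) (hτ : IsPermWord w.length τ)
    (hfact : ∀ p < w.length, w.getD p 0 = (chi w).getD (τ.getD p 0 - 1) 0) :
    ∀ i j : ℕ, i < j → j < w.length →
      σ.getD j 0 < σ.getD i 0 → τ.getD j 0 < τ.getD i 0 :=
  std_minimal_for_right_weak_order_general w σ τ hσ hτ hfact
end

section
/- Let u be a packed word of length n with letter set {1,…,r}, let i ∈ {1,…,n}, and let v be a packed word of length m with letter set {1,…,s}. Then the right composition u ∘→_i v := Inc_{s−1}^{u(i)}(u(1,…,i−1)) · Inc_{u(i)−1}^{0}(v) · Inc_{s−1}^{u(i)−1}(u(i+1,…,n)) is a packed word of length n+m−1 with letter set {1,…,r+s−1}. -/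
/-!
Write `c = u(i)`. The three blocks of `u ∘→_i v` occupy disjoint ranges of letters: the
letters of `u` below `c` are kept, `v` is shifted onto `{c, …, c + s - 1}`, and the letters
of `u` above `c` are shifted onto `{c + s, …, r + s - 1}`. The letter `c` itself, wherever it
occurs outside position `i`, lands at `c` or `c + s - 1`, which `v` already covers.
-/

open Finset

theorem IsPackedOn.mem_iff {k a : ℕ} {w : List ℕ} (hw : IsPackedOn k w) :
    a ∈ w ↔ 1 ≤ a ∧ a ≤ k := by
  rw [← List.mem_toFinset, hw, mem_Icc]

theorem maxLetter_eq_of_isPackedOn {s : ℕ} {v : List ℕ} (hv : IsPackedOn s v) :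
    maxLetter v = s := by
  refine le_antisymm (List.max_le_of_forall_le v s fun a ha => (hv.mem_iff.1 ha).2) ?_
  rcases Nat.eq_zero_or_pos s with rfl | hs
  · exact Nat.zero_le _
  · exact List.le_max_of_le (hv.mem_iff.2 ⟨hs, le_rfl⟩) le_rfl

theorem getD_mem_Icc_of_isPackedOn {r k : ℕ} {u : List ℕ} (hu : IsPackedOn r u)
    (hk : k < u.length) : u.getD k 0 ∈ Icc 1 r := by
  rw [← hu, List.getD_eq_getElem _ _ hk]
  exact List.mem_toFinset.2 (List.getElem_mem hk)

theorem List.mem_iff_mem_take_or_eq_getElem_or_mem_drop {α : Type*} {l : List α} {k : ℕ}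
    (hk : k < l.length) {a : α} : a ∈ l ↔ a ∈ l.take k ∨ a = l[k] ∨ a ∈ l.drop (k + 1) := by
  conv_lhs => rw [← List.take_append_drop k l, List.drop_eq_getElem_cons hk]
  simp only [List.mem_append, List.mem_cons]

theorem toFinset_Inc_subset {α β r : ℕ} {w : List ℕ} (hw : w.toFinset ⊆ Icc 1 r) :
    (Inc α β w).toFinset ⊆ Icc 1 (r + α) := by
  intro x hx
  obtain ⟨a, ha, rfl⟩ := List.mem_map.1 (List.mem_toFinset.1 hx)
  have := mem_Icc.1 (hw (List.mem_toFinset.2 ha))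
  rw [mem_Icc]
  split <;> omega

theorem length_rightComp {u v : List ℕ} {i : ℕ} (hi : i ∈ Icc 1 u.length) :
    (rightComp u i v).length = u.length + v.length - 1 := by
  have := mem_Icc.1 hi
  simp only [rightComp, Inc, List.length_append, List.length_map, List.length_take,
    List.length_drop]
  omega

section Letters

variable {r s i : ℕ} {u v : List ℕ}

theorem toFinset_rightComp_subset (hu : IsPackedOn r u) (hv : IsPackedOn s v) (hs : 1 ≤ s)
    (hi : i ∈ Icc 1 u.length) : (rightComp u i v).toFinset ⊆ Icc 1 (r + s - 1) := by
  have hc := mem_Icc.1 (getD_mem_Icc_of_isPackedOn hu (k := i - 1) (by grind))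
  have outer : ∀ (β : ℕ) (w : List ℕ), w ⊆ u →
      (Inc (s - 1) β w).toFinset ⊆ Icc 1 (r + s - 1) := fun β w hw => by
    have hw' : w.toFinset ⊆ Icc 1 r :=
      hu ▸ fun a ha => List.mem_toFinset.2 (hw (List.mem_toFinset.1 ha))
    rw [Nat.add_sub_assoc hs]
    exact toFinset_Inc_subset hw'
  have middle : (Inc (u.getD (i - 1) 0 - 1) 0 v).toFinset ⊆ Icc 1 (r + s - 1) := by
    refine (toFinset_Inc_subset hv.le).trans (Icc_subset_Icc le_rfl ?_)
    omega
  simp only [rightComp, maxLetter_eq_of_isPackedOn hv, List.toFinset_append]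
  exact union_subset (union_subset (outer _ _ (List.take_subset _ _)) middle)
    (outer _ _ (List.drop_subset _ _))

/-- The outer blocks shift by the thresholds `u(i)` and `u(i) - 1`, which disagree only on
the letter `u(i)` itself. -/
theorem mem_rightComp_of_mem_of_ne (hv : IsPackedOn s v) (hi : i ∈ Icc 1 u.length)
    {a : ℕ} (ha : a ∈ u) (hac : a ≠ u.getD (i - 1) 0) :
    (if u.getD (i - 1) 0 < a then a + (s - 1) else a) ∈ rightComp u i v := by
  have := mem_Icc.1 hi
  have hk : i - 1 < u.length := by omega
  rw [List.getD_eq_getElem _ _ hk] at hac ⊢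
  simp only [rightComp, Inc, maxLetter_eq_of_isPackedOn hv, List.mem_append, List.mem_map,
    List.getD_eq_getElem _ _ hk]
  rcases (List.mem_iff_mem_take_or_eq_getElem_or_mem_drop hk).1 ha with h | h | h
  · exact Or.inl (Or.inl ⟨a, h, rfl⟩)
  · exact absurd h hac
  · refine Or.inr ⟨a, by rwa [Nat.sub_add_cancel (by omega)] at h, ?_⟩
    split_ifs <;> omega

theorem Icc_subset_toFinset_rightComp (hu : IsPackedOn r u) (hv : IsPackedOn s v)
    (hs : 1 ≤ s) (hi : i ∈ Icc 1 u.length) :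
    Icc 1 (r + s - 1) ⊆ (rightComp u i v).toFinset := by
  set c := u.getD (i - 1) 0
  have hc := mem_Icc.1 (getD_mem_Icc_of_isPackedOn hu (k := i - 1) (by grind))
  intro x hx
  obtain ⟨hx1, hxr⟩ := mem_Icc.1 hx
  rw [List.mem_toFinset]
  by_cases hlow : x < c
  · have := mem_rightComp_of_mem_of_ne hv hi (hu.mem_iff.2 ⟨hx1, by omega⟩) (by omega)
    rwa [if_neg (by omega)] at this
  by_cases hmid : x < c + s
  · have hv' : x - (c - 1) ∈ v := hv.mem_iff.2 ⟨by omega, by omega⟩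
    simp only [rightComp, Inc, List.mem_append, List.mem_map]
    refine Or.inl (Or.inr ⟨x - (c - 1), hv', ?_⟩)
    rw [if_pos (by omega)]
    omega
  · have := mem_rightComp_of_mem_of_ne hv hi (a := x - (s - 1))
      (hu.mem_iff.2 ⟨by omega, by omega⟩) (by omega)
    rwa [if_pos (by omega), Nat.sub_add_cancel (by omega)] at this

end Letters

/-- The right composition of packed words is a packed word of length `n + m - 1` with
letter set `{1, …, r + s - 1}`. -/
theorem rightComp_isPacked (n m r s i : ℕ) (u v : List ℕ)
    (hu : IsPackedOn r u) (hun : u.length = n) (hi : i ∈ Finset.Icc 1 n)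
    (hv : IsPackedOn s v) (hvm : v.length = m) (hm : 1 ≤ m) :
    (rightComp u i v).length = n + m - 1 ∧ IsPackedOn (r + s - 1) (rightComp u i v) := by
  subst hun hvm
  have hs : 1 ≤ s := by
    obtain ⟨a, ha⟩ := List.exists_mem_of_length_pos hm
    exact (hv.mem_iff.1 ha).1.trans (hv.mem_iff.1 ha).2
  exact ⟨length_rightComp hi,
    (toFinset_rightComp_subset hu hv hs hi).antisymm (Icc_subset_toFinset_rightComp hu hv hs hi)⟩
end

section
/- The right composition of packed words satisfies the sequential (nested) associativity axiom: for packed words u of length n, v of length m, w of length p, and indices i ∈ {1,…,n}, j ∈ {1,…,m}, one has (u ∘→_i v) ∘→_{i+j−1} w = u ∘→_i (v ∘→_j w). -/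
/-!
Write `u = p · c · q` with `c = u(i)` and `v = p' · c' · q'` with `c' = v(j)`. Then
`u ∘→_i v` has the letter `c' + c - 1` at position `i + j - 1`, and both sides of the identity
become concatenations of five blocks coming from `p`, `p'`, `w`, `q'`, `q`, each acted on by two
increments. Since `max (v ∘→_j w) = max v + max w - 1`, the two increments on each block either
compose into a single one or commute, which matches the blocks letter by letter.
-/

theorem List.exists_eq_append_cons_length_eq {α : Type*} {l : List α} {n : ℕ}
    (h : n < l.length) : ∃ p c q, l = p ++ c :: q ∧ p.length = n :=
  ⟨l.take n, l[n], l.drop (n + 1), by rw [List.getElem_cons_drop, List.take_append_drop],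
    List.length_take_of_le h.le⟩

theorem IsPacked.pos {w : List ℕ} (hw : IsPacked w) {x : ℕ} (hx : x ∈ w) : 0 < x := by
  obtain ⟨k, hk⟩ := hw
  have : x ∈ Finset.Icc 1 k := hk ▸ List.mem_toFinset.mpr hx
  exact (Finset.mem_Icc.mp this).1

section Inc

variable (α β γ δ : ℕ) (l : List ℕ)

@[simp]
theorem length_Inc : (Inc α β l).length = l.length := List.length_map _

theorem Inc_append (l₁ l₂ : List ℕ) : Inc α β (l₁ ++ l₂) = Inc α β l₁ ++ Inc α β l₂ :=
  List.map_append

theorem Inc_cons (a : ℕ) :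
    Inc α β (a :: l) = (if β < a then a + α else a) :: Inc α β l := rfl

variable {α β γ δ} in
theorem Inc_Inc_of_le (h₁ : δ ≤ β) (h₂ : β ≤ δ + γ) : Inc α β (Inc γ δ l) = Inc (γ + α) δ l := by
  simp only [Inc, List.map_map]
  refine List.map_congr_left fun x _ => ?_
  simp only [Function.comp_apply]
  split_ifs <;> omega

theorem Inc_add_Inc_zero_comm : Inc α (β + γ) (Inc γ 0 l) = Inc γ 0 (Inc α β l) := by
  simp only [Inc, List.map_map]
  refine List.map_congr_left fun x _ => ?_
  simp only [Function.comp_apply]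
  split_ifs <;> omega

end Inc

section maxLetter

theorem le_maxLetter {l : List ℕ} {x : ℕ} (hx : x ∈ l) : x ≤ maxLetter l := by
  induction l with
  | nil => simp at hx
  | cons y l ih =>
    rcases List.mem_cons.mp hx with rfl | hx
    · exact le_max_left _ _
    · exact (ih hx).trans (le_max_right _ _)

@[simp]
theorem maxLetter_cons (a : ℕ) (l : List ℕ) : maxLetter (a :: l) = max a (maxLetter l) := rfl

@[simp]
theorem maxLetter_append (l₁ l₂ : List ℕ) :
    maxLetter (l₁ ++ l₂) = max (maxLetter l₁) (maxLetter l₂) := by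
  induction l₁ with
  | nil => simp [maxLetter]
  | cons a l ih => simp [ih, max_assoc]

@[simp]
theorem maxLetter_Inc (α β : ℕ) (l : List ℕ) :
    maxLetter (Inc α β l) = if β < maxLetter l then maxLetter l + α else maxLetter l := by
  induction l with
  | nil => simp [maxLetter, Inc]
  | cons a l ih =>
    rw [Inc_cons, maxLetter_cons, ih, maxLetter_cons]
    split_ifs <;> omega

end maxLetter

theorem rightComp_append_cons (p q v : List ℕ) (c : ℕ) :
    rightComp (p ++ c :: q) (p.length + 1) v =
      Inc (maxLetter v - 1) c p ++ Inc (c - 1) 0 v ++ Inc (maxLetter v - 1) (c - 1) q := by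
  simp [rightComp]

theorem rightComp_append_cons_append_cons (p q p' q' : List ℕ) (c c' : ℕ) (hc' : 0 < c') :
    rightComp (p ++ c :: q) (p.length + 1) (p' ++ c' :: q') =
      (Inc (maxLetter (p' ++ c' :: q') - 1) c p ++ Inc (c - 1) 0 p') ++
        (c' + (c - 1)) :: (Inc (c - 1) 0 q' ++ Inc (maxLetter (p' ++ c' :: q') - 1) (c - 1) q) := by
  rw [rightComp_append_cons, Inc_append, Inc_cons, if_pos hc']
  simp only [List.append_assoc, List.cons_append]

theorem maxLetter_rightComp_append_cons (p q w : List ℕ) (c : ℕ) (hc : 0 < c)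
    (hw : 0 < maxLetter w) :
    maxLetter (rightComp (p ++ c :: q) (p.length + 1) w) =
      maxLetter (p ++ c :: q) + maxLetter w - 1 := by
  simp only [rightComp_append_cons, maxLetter_append, maxLetter_Inc, maxLetter_cons]
  split_ifs <;> omega

/-- Sequential (nested) associativity for the right composition of packed words. -/
theorem rightComp_sequential_assoc (u v w : List ℕ)
    (hu : IsPacked u) (hv : IsPacked v) (hw : IsPacked w) (i j : ℕ)
    (hi : i ∈ Finset.Icc 1 u.length) (hj : j ∈ Finset.Icc 1 v.length)
    (hw1 : 1 ≤ w.length) :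
    rightComp (rightComp u i v) (i + j - 1) w = rightComp u i (rightComp v j w) := by
  rw [Finset.mem_Icc] at hi hj
  obtain ⟨p, c, q, rfl, hp⟩ := List.exists_eq_append_cons_length_eq
    (show i - 1 < u.length by omega)
  obtain ⟨p', c', q', rfl, hp'⟩ := List.exists_eq_append_cons_length_eq
    (show j - 1 < v.length by omega)
  obtain rfl : i = p.length + 1 := by omega
  obtain rfl : j = p'.length + 1 := by omega
  have hc : 0 < c := hu.pos (by simp)
  have hc' : 0 < c' := hv.pos (by simp)
  have ht : 0 < maxLetter w := by
    obtain ⟨x, hx⟩ := List.exists_mem_of_length_pos hw1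
    exact (hw.pos hx).trans_le (le_maxLetter hx)
  have hs : c' ≤ maxLetter (p' ++ c' :: q') := le_maxLetter (by simp)
  rw [rightComp_append_cons_append_cons _ _ _ _ _ _ hc',
    show p.length + 1 + (p'.length + 1) - 1 = (Inc (maxLetter (p' ++ c' :: q') - 1) c p ++
      Inc (c - 1) 0 p').length + 1 by simp; omega,
    rightComp_append_cons, rightComp_append_cons p, maxLetter_rightComp_append_cons _ _ _ _ hc' ht,
    rightComp_append_cons]
  set s := maxLetter (p' ++ c' :: q')
  set t := maxLetter w
  rw [show s + t - 1 - 1 = s - 1 + (t - 1) by omega,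
    show c' + (c - 1) - 1 = c' - 1 + (c - 1) by omega]
  simp only [Inc_append, List.append_assoc, Inc_add_Inc_zero_comm]
  rw [Inc_Inc_of_le p (by omega) (by omega), Inc_Inc_of_le q (by omega) (by omega),
    Inc_Inc_of_le w le_rfl (Nat.zero_le _)]
end

section
/- The composition type of a right composition of packed words is obtained by interstice insertion: let u be a packed word of length n, i ∈ {1,…,n}, v a packed word of length m, and set r := st(u)(i). For any word x of length ℓ, let enc(x) ∈ {1,2}^{ℓ−1} be defined by enc(x)(p) = 2 if χ(x)(p) < χ(x)(p+1) and enc(x)(p) = 1 otherwise, where χ(x) is the weakly increasing rearrangement of x. Then enc(u ∘→_i v) = enc(u)(1,…,r−1) · enc(v) · enc(u)(r,…,n−1). -/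
/-- The `{1, 2}`-encoding of the composition type of a word: `enc(x)(p) = 2` if
`χ(x)(p) < χ(x)(p+1)` and `1` otherwise (0-based `p`). -/
def enc (x : List ℕ) : List ℕ :=
  (List.range (x.length - 1)).map fun p =>
    if (chi x).getD p 0 < (chi x).getD (p + 1) 0 then 2 else 1

def countLE (x : List ℕ) (a : ℕ) : ℕ := x.countP (· ≤ a)

lemma countLE_append (x y : List ℕ) (a : ℕ) : countLE (x ++ y) a = countLE x a + countLE y a :=
  List.countP_append ..

lemma countLE_cons (b : ℕ) (x : List ℕ) (a : ℕ) :
    countLE (b :: x) a = countLE x a + if b ≤ a then 1 else 0 := by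
  simp [countLE, List.countP_cons]

lemma countLE_mono (x : List ℕ) : Monotone (countLE x) := fun _ _ h =>
  List.countP_mono_left fun b _ hb => by simp only [decide_eq_true_eq] at hb ⊢; omega

lemma countLE_eq_length_of_forall_le {x : List ℕ} {a : ℕ} (h : ∀ b ∈ x, b ≤ a) :
    countLE x a = x.length :=
  List.countP_eq_length.mpr fun b hb => decide_eq_true (h b hb)

lemma countLE_eq_zero_of_forall_lt {x : List ℕ} {a : ℕ} (h : ∀ b ∈ x, a < b) :
    countLE x a = 0 :=
  List.countP_eq_zero.mpr fun b hb => by simpa using h b hb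

lemma countLE_Inc_of_le_add {α β a : ℕ} (x : List ℕ) (h : a ≤ β + α) :
    countLE (Inc α β x) a = countLE x (min a β) := by
  simp only [countLE, Inc, List.countP_map]
  exact List.countP_congr fun b _ => by
    simp only [Function.comp, decide_eq_true_eq]; split <;> omega

lemma countLE_Inc_of_add_le {α β a : ℕ} (x : List ℕ) (h : β + α ≤ a) :
    countLE (Inc α β x) a = countLE x (a - α) := by
  simp only [countLE, Inc, List.countP_map]
  exact List.countP_congr fun b _ => by
    simp only [Function.comp, decide_eq_true_eq]; split <;> omega

lemma lt_countLE_iff_of_pairwise {y : List ℕ} (hy : y.Pairwise (· ≤ ·)) {q : ℕ}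
    (hq : q < y.length) (a : ℕ) : q < countLE y a ↔ y[q] ≤ a := by
  induction y generalizing q with
  | nil => simp at hq
  | cons b t ih =>
    obtain ⟨hb, ht⟩ := List.pairwise_cons.mp hy
    rw [countLE_cons]
    by_cases hba : b ≤ a
    · cases q with
      | zero => simp [hba]
      | succ q => simp [hba, ih ht (by simpa using hq : q < t.length)]
    · have ht0 : countLE t a = 0 :=
        countLE_eq_zero_of_forall_lt fun x hx => by have := hb x hx; omega
      cases q with
      | zero => simp [hba, ht0]
      | succ q =>
        have := hb _ (t.getElem_mem (by simpa using hq : q < t.length))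
        simp only [ht0, hba, ↓reduceIte, List.getElem_cons_succ]
        omega

lemma getElem_lt_getElem_succ_iff_of_pairwise {y : List ℕ} (hy : y.Pairwise (· ≤ ·)) {p : ℕ}
    (hp : p + 1 < y.length) : y[p] < y[p + 1] ↔ p + 1 ∈ Set.range (countLE y) := by
  have h₁ := lt_countLE_iff_of_pairwise hy (p.lt_succ_self.trans hp)
  have h₂ := lt_countLE_iff_of_pairwise hy hp
  constructor
  · intro h
    refine ⟨y[p], le_antisymm ?_ ((h₁ _).mpr le_rfl)⟩
    by_contra! h'
    exact absurd ((h₂ _).mp h') (not_le.mpr h)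
  · rintro ⟨a, ha⟩
    have := (h₁ a).mp (by omega)
    have := mt (h₂ a).mpr (by omega)
    omega

open Classical in
lemma enc_eq_map (x : List ℕ) :
    enc x = (List.range (x.length - 1)).map
      fun p => if p + 1 ∈ Set.range (countLE x) then 2 else 1 := by
  have hperm := List.perm_insertionSort (· ≤ ·) x
  have hlen : (chi x).length = x.length := hperm.length_eq
  have hcount : countLE (chi x) = countLE x := funext fun a => hperm.countP_eq _
  refine List.map_congr_left fun p hp => if_congr ?_ rfl rfl
  rw [List.mem_range] at hp
  have hsorted : (chi x).Pairwise (· ≤ ·) := List.pairwise_insertionSort _ x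
  rw [List.getD_eq_getElem _ _ (by omega), List.getD_eq_getElem _ _ (by omega),
    getElem_lt_getElem_succ_iff_of_pairwise hsorted, hcount]

open Classical in
lemma enc_eq_take_append_append_drop {x y z : List ℕ} {R : ℕ} (hR : R < x.length)
    (hy : 0 < y.length) (hz : z.length + 1 = x.length + y.length)
    (h₁ : ∀ t ≤ R, t ∈ Set.range (countLE z) ↔ t ∈ Set.range (countLE x))
    (h₂ : ∀ t, 1 ≤ t → t < y.length →
      (R + t ∈ Set.range (countLE z) ↔ t ∈ Set.range (countLE y)))
    (h₃ : ∀ t, R < t →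
      (t + (y.length - 1) ∈ Set.range (countLE z) ↔ t ∈ Set.range (countLE x))) :
    enc z = (enc x).take R ++ enc y ++ (enc x).drop R := by
  obtain ⟨N, hN⟩ : ∃ N, x.length - 1 = R + N := ⟨x.length - 1 - R, by omega⟩
  have hzN : z.length - 1 = R + (y.length - 1) + N := by omega
  rw [enc_eq_map x, enc_eq_map y, enc_eq_map z, hN, hzN, List.range_add, List.range_add,
    List.range_add]
  simp only [List.map_append, List.map_map]
  rw [List.take_left' (by simp), List.drop_left' (by simp)]
  refine congrArg₂ (· ++ ·) (congrArg₂ (· ++ ·) ?_ ?_) ?_ <;>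
    refine List.map_congr_left fun p hp => ?_ <;>
    simp only [List.mem_range, Function.comp_apply] at hp ⊢
  · exact if_congr (h₁ _ (by omega)) rfl rfl
  · refine if_congr ?_ rfl rfl
    rw [← h₂ (p + 1) (by omega) (by omega), ← add_assoc]
  · refine if_congr ?_ rfl rfl
    rw [← h₃ (R + p + 1) (by omega)]
    exact iff_of_eq (congrArg _ (by omega))

lemma countP_eq_countP_of_getElem {α : Type*} {l₁ l₂ : List α} {p q : α → Bool}
    (hlen : l₁.length = l₂.length)
    (h : ∀ j (h₁ : j < l₁.length) (h₂ : j < l₂.length), p l₁[j] = q l₂[j]) :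
    l₁.countP p = l₂.countP q := by
  have hmap : l₁.map p = l₂.map q :=
    List.ext_getElem (by simpa using hlen) fun j h₁ h₂ => by
      simpa using h j (by simpa using h₁) (by simpa using h₂)
  simpa [List.countP_map] using congrArg (List.countP id) hmap

lemma IsPermWord.nodup {n : ℕ} {σ : List ℕ} (h : IsPermWord n σ) : σ.Nodup := by
  rw [← Multiset.coe_nodup, ← Multiset.toFinset_card_eq_card_iff_nodup]
  simpa [h.2] using h.1.symm

lemma IsPermWord.countLE_eq {n t : ℕ} {σ : List ℕ} (h : IsPermWord n σ) (ht : t ≤ n) :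
    countLE σ t = t := by
  rw [countLE, List.countP_eq_length_filter, ← List.toFinset_card_of_nodup (h.nodup.filter _),
    List.toFinset_filter, h.2]
  rw [show {x ∈ Finset.Icc 1 n | decide (x ≤ t) = true} = Finset.Icc 1 t by ext; simp; omega]
  simp

def stdBelow (pre : List ℕ) (c : ℕ) (suf : List ℕ) : ℕ :=
  countLE pre c + countLE suf (c - 1)

lemma IsStdOf.getD_length_eq {pre suf σ : List ℕ} {c : ℕ} (hc : 1 ≤ c)
    (hσ : IsStdOf (pre ++ c :: suf) σ) : σ.getD pre.length 0 = stdBelow pre c suf + 1 := by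
  obtain ⟨hperm, hinv⟩ := hσ
  set k := pre.length
  have hulen : (pre ++ c :: suf).length = k + 1 + suf.length := by simp [k]; omega
  have hlen : σ.length = k + 1 + suf.length := hperm.1.trans hulen
  have hk : k < σ.length := by omega
  have hu_lt : ∀ j (hj : j < k), (pre ++ c :: suf).getD j 0 = pre[j] := fun j hj => by
    simp [List.getElem?_append_left hj, List.getElem?_eq_getElem hj]
  have hu_k : (pre ++ c :: suf).getD k 0 = c := by simp [k]
  have hu_gt : ∀ t (ht : t < suf.length), (pre ++ c :: suf).getD (k + 1 + t) 0 = suf[t] :=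
    fun t ht => by
      simp [k, List.getElem?_append_right, Nat.add_assoc, Nat.add_comm 1 t,
        List.getElem?_eq_getElem ht]
  have hpre : countLE (σ.take k) σ[k] = countLE pre c := by
    refine countP_eq_countP_of_getElem (by simp; omega) fun j h₁ _ => ?_
    have hj : j < k := by simp at h₁; omega
    have := hinv j k hj (by omega)
    rw [hu_lt j hj, hu_k, List.getD_eq_getElem _ _ hk,
      List.getD_eq_getElem _ _ (by omega)] at this
    simp only [List.getElem_take, decide_eq_decide]
    omega
  have hsuf : countLE (σ.drop (k + 1)) σ[k] = countLE suf (c - 1) := by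
    refine countP_eq_countP_of_getElem (by simp; omega) fun t h₁ h₂ => ?_
    have := hinv k (k + 1 + t) (by omega) (by omega)
    rw [hu_gt t h₂, hu_k, List.getD_eq_getElem _ _ hk,
      List.getD_eq_getElem _ _ (by omega)] at this
    have hne : σ[k + 1 + t] ≠ σ[k] := by
      rw [Ne, hperm.nodup.getElem_inj_iff]; omega
    simp only [List.getElem_drop, decide_eq_decide]
    omega
  have hσk : σ[k] ≤ (pre ++ c :: suf).length := by
    have := List.mem_toFinset.mpr (σ.getElem_mem hk)
    rw [hperm.2, Finset.mem_Icc] at this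
    exact this.2
  -- the permutation value `σ[k]` is the number of entries `≤ σ[k]`, split around position `k`
  have hcount := countLE_append (σ.take k) (σ.drop k) σ[k]
  rw [List.take_append_drop, hperm.countLE_eq hσk, List.drop_eq_getElem_cons hk, countLE_cons,
    hpre, hsuf, if_pos le_rfl] at hcount
  rw [List.getD_eq_getElem _ _ hk, stdBelow]
  omega

section Packed

variable {s : ℕ} {v : List ℕ}

lemma IsPackedOn.mem_iff_s8 (hv : IsPackedOn s v) {b : ℕ} : b ∈ v ↔ 1 ≤ b ∧ b ≤ s := by
  rw [← List.mem_toFinset, hv, Finset.mem_Icc]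

lemma IsPackedOn.maxLetter_eq (hv : IsPackedOn s v) : maxLetter v = s := by
  refine le_antisymm (List.max_le_of_forall_le v s fun b hb => (hv.mem_iff_s8.mp hb).2) ?_
  rcases Nat.eq_zero_or_pos s with rfl | hs
  · exact Nat.zero_le _
  · exact List.le_max_of_le' 0 (hv.mem_iff_s8.mpr ⟨hs, le_rfl⟩) le_rfl

lemma IsPackedOn.countLE_zero (hv : IsPackedOn s v) : countLE v 0 = 0 :=
  countLE_eq_zero_of_forall_lt fun _ hb => (hv.mem_iff_s8.mp hb).1

lemma IsPackedOn.countLE_of_le (hv : IsPackedOn s v) {b : ℕ} (hb : s ≤ b) :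
    countLE v b = v.length :=
  countLE_eq_length_of_forall_le fun _ hx => (hv.mem_iff_s8.mp hx).2.trans hb

lemma IsPackedOn.countLE_lt_length (hv : IsPackedOn s v) {b : ℕ} (hb : b < s) :
    countLE v b < v.length := by
  refine lt_of_le_of_ne List.countP_le_length fun h => ?_
  have := List.countP_eq_length.mp h s (hv.mem_iff_s8.mpr ⟨by omega, le_rfl⟩)
  simp only [decide_eq_true_eq] at this
  omega

lemma IsPackedOn.one_le_countLE (hv : IsPackedOn s v) (hs : 1 ≤ s) {b : ℕ} (hb : 1 ≤ b) :
    1 ≤ countLE v b :=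
  List.countP_pos_iff.mpr ⟨1, hv.mem_iff_s8.mpr ⟨le_rfl, hs⟩, decide_eq_true hb⟩

lemma IsPackedOn.length_pos (hv : IsPackedOn s v) (hs : 1 ≤ s) : 0 < v.length :=
  List.length_pos_of_mem (hv.mem_iff_s8.mpr ⟨le_rfl, hs⟩)

end Packed

section RightComp

variable {pre suf v : List ℕ} {c s a : ℕ}

lemma length_rightComp_append_cons :
    (rightComp (pre ++ c :: suf) (pre.length + 1) v).length + 1
      = (pre ++ c :: suf).length + v.length := by
  simp [rightComp, Inc]
  omega

lemma countLE_append_cons_le_stdBelow (ha : a < c) :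
    countLE (pre ++ c :: suf) a ≤ stdBelow pre c suf := by
  rw [countLE_append, countLE_cons, if_neg (by omega), stdBelow]
  have := countLE_mono pre ha.le
  have := countLE_mono suf (show a ≤ c - 1 by omega)
  omega

lemma stdBelow_lt_countLE_append_cons (ha : c ≤ a) :
    stdBelow pre c suf < countLE (pre ++ c :: suf) a := by
  rw [countLE_append, countLE_cons, if_pos ha, stdBelow]
  have := countLE_mono pre ha
  have := countLE_mono suf (show c - 1 ≤ a by omega)
  omega

lemma countLE_rightComp (hc : 1 ≤ c) (hv : IsPackedOn s v) (a : ℕ) :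
    countLE (rightComp (pre ++ c :: suf) (pre.length + 1) v) a
      = countLE (Inc (s - 1) c pre) a + countLE v (a + 1 - c)
          + countLE (Inc (s - 1) (c - 1) suf) a := by
  have hv' : countLE (Inc (c - 1) 0 v) a = countLE v (a + 1 - c) := by
    rcases le_or_gt (c - 1) a with h | h
    · rw [countLE_Inc_of_add_le v (by omega)]; congr 1; omega
    · rw [countLE_Inc_of_le_add v (by omega)]; congr 1; omega
  simp [rightComp, countLE_append, hv.maxLetter_eq, hv', add_assoc]

lemma countLE_rightComp_of_lt (hc : 1 ≤ c) (hv : IsPackedOn s v) (ha : a < c) :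
    countLE (rightComp (pre ++ c :: suf) (pre.length + 1) v) a = countLE (pre ++ c :: suf) a := by
  rw [countLE_rightComp hc hv, countLE_Inc_of_le_add pre (by omega),
    countLE_Inc_of_le_add suf (by omega), show a + 1 - c = 0 by omega, hv.countLE_zero,
    countLE_append, countLE_cons, if_neg (by omega), min_eq_left ha.le, min_eq_left (by omega)]
  ring

lemma countLE_rightComp_of_le_of_lt (hc : 1 ≤ c) (hv : IsPackedOn s v) (h₁ : c ≤ a)
    (h₂ : a < c + (s - 1)) :
    countLE (rightComp (pre ++ c :: suf) (pre.length + 1) v) a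
      = stdBelow pre c suf + countLE v (a + 1 - c) := by
  rw [countLE_rightComp hc hv, countLE_Inc_of_le_add pre (by omega),
    countLE_Inc_of_le_add suf (by omega), min_eq_right h₁, min_eq_right (by omega), stdBelow]
  ring

lemma countLE_rightComp_of_le (hc : 1 ≤ c) (hv : IsPackedOn s v) (h : c + (s - 1) ≤ a) :
    countLE (rightComp (pre ++ c :: suf) (pre.length + 1) v) a + 1
      = countLE (pre ++ c :: suf) (a - (s - 1)) + v.length := by
  rw [countLE_rightComp hc hv, countLE_Inc_of_add_le pre (by omega),
    countLE_Inc_of_add_le suf (by omega), hv.countLE_of_le (by omega), countLE_append,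
    countLE_cons, if_pos (by omega)]
  ring

lemma mem_range_countLE_rightComp_iff_of_le (hc : 1 ≤ c) (hv : IsPackedOn s v) (hs : 1 ≤ s)
    {t : ℕ} (ht : t ≤ stdBelow pre c suf) :
    t ∈ Set.range (countLE (rightComp (pre ++ c :: suf) (pre.length + 1) v))
      ↔ t ∈ Set.range (countLE (pre ++ c :: suf)) := by
  constructor
  · rintro ⟨a, rfl⟩
    refine ⟨a, (countLE_rightComp_of_lt hc hv ?_).symm⟩
    by_contra! h₁
    rcases lt_or_ge a (c + (s - 1)) with h₂ | h₂
    · have := countLE_rightComp_of_le_of_lt (pre := pre) (suf := suf) hc hv h₁ h₂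
      have := hv.one_le_countLE hs (b := a + 1 - c) (by omega)
      omega
    · have := countLE_rightComp_of_le (pre := pre) (suf := suf) hc hv h₂
      have := hv.length_pos hs
      have := stdBelow_lt_countLE_append_cons (pre := pre) (c := c) (suf := suf) (a := a - (s - 1))
        (by omega)
      omega
  · rintro ⟨a, rfl⟩
    refine ⟨a, countLE_rightComp_of_lt hc hv ?_⟩
    by_contra! h
    exact (stdBelow_lt_countLE_append_cons h).not_ge ht

lemma stdBelow_add_mem_range_countLE_rightComp_iff (hc : 1 ≤ c) (hv : IsPackedOn s v) {t : ℕ}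
    (ht₁ : 1 ≤ t) (ht₂ : t < v.length) :
    stdBelow pre c suf + t ∈ Set.range (countLE (rightComp (pre ++ c :: suf) (pre.length + 1) v))
      ↔ t ∈ Set.range (countLE v) := by
  constructor
  · rintro ⟨a, ha⟩
    have h₁ : c ≤ a := by
      by_contra! h
      rw [countLE_rightComp_of_lt hc hv h] at ha
      have := countLE_append_cons_le_stdBelow (pre := pre) (suf := suf) h
      omega
    have h₂ : a < c + (s - 1) := by
      by_contra! h
      have := countLE_rightComp_of_le (pre := pre) (suf := suf) hc hv h
      have := stdBelow_lt_countLE_append_cons (pre := pre) (c := c) (suf := suf) (a := a - (s - 1))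
        (by omega)
      omega
    rw [countLE_rightComp_of_le_of_lt hc hv h₁ h₂] at ha
    exact ⟨a + 1 - c, by omega⟩
  · rintro ⟨b, rfl⟩
    have hb₁ : 1 ≤ b := by
      by_contra! h
      rw [Nat.lt_one_iff.mp h, hv.countLE_zero] at ht₁
      omega
    have hb₂ : b < s := by
      by_contra! h
      rw [hv.countLE_of_le h] at ht₂
      omega
    refine ⟨c + b - 1, ?_⟩
    rw [countLE_rightComp_of_le_of_lt hc hv (by omega) (by omega),
      show c + b - 1 + 1 - c = b by omega]

lemma add_mem_range_countLE_rightComp_iff (hc : 1 ≤ c) (hv : IsPackedOn s v) (hs : 1 ≤ s)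
    {t : ℕ} (ht : stdBelow pre c suf < t) :
    t + (v.length - 1) ∈ Set.range (countLE (rightComp (pre ++ c :: suf) (pre.length + 1) v))
      ↔ t ∈ Set.range (countLE (pre ++ c :: suf)) := by
  have := hv.length_pos hs
  constructor
  · rintro ⟨a, ha⟩
    have h : c + (s - 1) ≤ a := by
      by_contra! h₂
      rcases lt_or_ge a c with h₁ | h₁
      · rw [countLE_rightComp_of_lt hc hv h₁] at ha
        have := countLE_append_cons_le_stdBelow (pre := pre) (suf := suf) h₁
        omega
      · rw [countLE_rightComp_of_le_of_lt hc hv h₁ h₂] at ha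
        have := hv.countLE_lt_length (b := a + 1 - c) (by omega)
        omega
    have := countLE_rightComp_of_le (pre := pre) (suf := suf) hc hv h
    exact ⟨a - (s - 1), by omega⟩
  · rintro ⟨a, rfl⟩
    have h : c ≤ a := by
      by_contra! h
      exact (countLE_append_cons_le_stdBelow h).not_gt ht
    have := countLE_rightComp_of_le (pre := pre) (suf := suf) (a := a + (s - 1)) hc hv (by omega)
    exact ⟨a + (s - 1), by rw [Nat.add_sub_cancel] at this; omega⟩

end RightComp

/-- The composition type of a right composition of packed words is obtained by interstice
insertion at position `r = st(u)(i)`: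
`enc(u ∘→_i v) = enc(u)(1, …, r-1) · enc(v) · enc(u)(r, …, n-1)`. -/
theorem enc_rightComp (u v σ : List ℕ) (hu : IsPacked u) (hv : IsPacked v) (i : ℕ)
    (hi : i ∈ Finset.Icc 1 u.length) (hv1 : 1 ≤ v.length) (hσ : IsStdOf u σ) :
    enc (rightComp u i v)
      = (enc u).take (σ.getD (i - 1) 0 - 1) ++ enc v
          ++ (enc u).drop (σ.getD (i - 1) 0 - 1) := by
  obtain ⟨k, hu⟩ := hu
  obtain ⟨s, hv⟩ := hv
  rw [Finset.mem_Icc] at hi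
  obtain ⟨j, rfl⟩ : ∃ j, i = j + 1 := ⟨i - 1, by omega⟩
  obtain ⟨pre, c, suf, rfl, rfl⟩ : ∃ pre c suf, u = pre ++ c :: suf ∧ j = pre.length :=
    ⟨u.take j, u[j], u.drop (j + 1),
      by rw [← List.drop_eq_getElem_cons, List.take_append_drop], by simp; omega⟩
  have hc : 1 ≤ c := (hu.mem_iff_s8.mp (by simp)).1
  have hs : 1 ≤ s := by
    obtain ⟨b, hb⟩ := List.exists_mem_of_length_pos hv1
    exact (hv.mem_iff_s8.mp hb).1.trans (hv.mem_iff_s8.mp hb).2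
  rw [Nat.add_sub_cancel, hσ.getD_length_eq hc, Nat.add_sub_cancel]
  exact enc_eq_take_append_append_drop
    ((stdBelow_lt_countLE_append_cons le_rfl).trans_le List.countP_le_length) hv1
    length_rightComp_append_cons
    (fun _ => mem_range_countLE_rightComp_iff_of_le hc hv hs)
    (fun _ => stdBelow_add_mem_range_countLE_rightComp_iff hc hv)
    (fun _ => add_mem_range_countLE_rightComp_iff hc hv hs)
end

section
/- The left composition of packed words satisfies the parallel (disjoint) associativity axiom: for a packed word u with letter set {1,…,n}, packed words v with letter set {1,…,m} and w with letter set {1,…,p}, and indices 1 ≤ i < j ≤ n, one has (u ∘←_j w) ∘←_i v = (u ∘←_i v) ∘←_{j+m−1} w. -/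
/-!
`leftComp` substitutes a word for each letter, so it commutes with `flatMap` and both sides can be
compared one letter `a` of `u` at a time. For `a = j`, the block `Inc (j - 1) 0 w` only has letters
`0` or `≥ j > i`, so composing at `i` just shifts it; for `a = i`, the block `Inc (i - 1) 0 v` only
has letters `< j + m - 1`, so composing at `j + m - 1` leaves it alone. Any other letter is merely
shifted, by the same total amount on both sides.
-/

lemma maxLetter_le {v : List ℕ} {k : ℕ} (h : ∀ a ∈ v, a ≤ k) : maxLetter v ≤ k :=
  List.max_le_of_forall_le v k h

lemma le_maxLetter_s11 {v : List ℕ} {a : ℕ} (h : a ∈ v) : a ≤ maxLetter v :=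
  List.le_max_of_le' 0 h le_rfl

lemma IsPackedOn.maxLetter_eq_s11 {k : ℕ} {v : List ℕ} (h : IsPackedOn k v) : maxLetter v = k := by
  have hmem : ∀ a, a ∈ v ↔ 1 ≤ a ∧ a ≤ k := fun a => by
    rw [← List.mem_toFinset, h, Finset.mem_Icc]
  refine le_antisymm (maxLetter_le fun a ha => ((hmem a).1 ha).2) ?_
  rcases Nat.eq_zero_or_pos k with rfl | hk
  · exact Nat.zero_le _
  · exact le_maxLetter_s11 ((hmem k).2 ⟨hk, le_rfl⟩)

lemma Inc_eq_self {α β : ℕ} {l : List ℕ} (h : ∀ a ∈ l, a ≤ β) : Inc α β l = l :=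
  (List.map_congr_left fun a ha => if_neg (h a ha).not_gt).trans (List.map_id l)

lemma Inc_singleton (α β a : ℕ) : Inc α β [a] = [if β < a then a + α else a] := rfl

lemma leftComp_flatMap (l : List ℕ) (f : ℕ → List ℕ) (i : ℕ) (v : List ℕ) :
    leftComp (l.flatMap f) i v = l.flatMap fun a => leftComp (f a) i v :=
  List.flatMap_assoc

lemma leftComp_eq_flatMap_singleton (u : List ℕ) (i : ℕ) (v : List ℕ) :
    leftComp u i v = u.flatMap fun a => leftComp [a] i v := by
  conv_lhs => rw [← List.flatMap_singleton' u]
  exact leftComp_flatMap ..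

lemma leftComp_singleton_self (i : ℕ) (v : List ℕ) : leftComp [i] i v = Inc (i - 1) 0 v := by
  simp [leftComp]

lemma leftComp_of_notMem {u : List ℕ} {i : ℕ} (v : List ℕ) (h : i ∉ u) :
    leftComp u i v = Inc (maxLetter v - 1) i u := by
  refine (List.flatMap_congr fun a ha => ?_).trans (List.flatMap_pure_eq_map _ u)
  exact if_neg (ne_of_mem_of_not_mem ha h)

lemma Inc_Inc_zero {α β γ : ℕ} (l : List ℕ) (h : β ≤ γ) :
    Inc α β (Inc γ 0 l) = Inc (γ + α) 0 l := by
  simp only [Inc, List.map_map]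
  refine List.map_congr_left fun c _ => ?_
  simp only [Function.comp_apply]
  split_ifs <;> omega

lemma le_add_maxLetter_of_mem_Inc_zero {γ c : ℕ} {v : List ℕ} (h : c ∈ Inc γ 0 v) :
    c ≤ γ + maxLetter v := by
  obtain ⟨b, hb, rfl⟩ := List.mem_map.mp h
  have := le_maxLetter_s11 hb
  split_ifs <;> omega

lemma leftComp_singleton_leftComp_singleton {i j : ℕ} (a : ℕ) (v w : List ℕ) (hi : 0 < i)
    (hij : i < j) (hv : 0 < maxLetter v) :
    leftComp (leftComp [a] j w) i v = leftComp (leftComp [a] i v) (j + maxLetter v - 1) w := by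
  rcases eq_or_ne a j with rfl | haj
  · have hi_notMem : i ∉ Inc (a - 1) 0 w := fun hmem => by
      obtain ⟨c, -, hc⟩ := List.mem_map.mp hmem
      split_ifs at hc <;> omega
    rw [leftComp_singleton_self, leftComp_of_notMem v hi_notMem, Inc_Inc_zero w (by omega),
      leftComp_of_notMem v (by simpa using hij.ne), Inc_singleton, if_pos hij,
      show a + (maxLetter v - 1) = a + maxLetter v - 1 by omega, leftComp_singleton_self]
    congr 1
    omega
  rcases eq_or_ne a i with rfl | hai
  · have hlt : ∀ c ∈ Inc (a - 1) 0 v, c < j + maxLetter v - 1 := fun c hc => by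
      have := le_add_maxLetter_of_mem_Inc_zero hc
      omega
    rw [leftComp_of_notMem w (by simpa using hij.ne'), Inc_singleton, if_neg hij.not_gt,
      leftComp_singleton_self, leftComp_of_notMem w fun hmem => (hlt _ hmem).false,
      Inc_eq_self fun c hc => (hlt c hc).le]
  · simp only [leftComp, List.flatMap_singleton, if_neg haj, if_neg hai]
    split_ifs <;> first | omega | (rw [List.singleton_inj] <;> omega)

theorem leftComp_leftComp_of_lt {i j : ℕ} (u v w : List ℕ) (hi : 0 < i) (hij : i < j)
    (hv : 0 < maxLetter v) :
    leftComp (leftComp u j w) i v = leftComp (leftComp u i v) (j + maxLetter v - 1) w := by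
  rw [leftComp_eq_flatMap_singleton u j, leftComp_flatMap, leftComp_eq_flatMap_singleton u i,
    leftComp_flatMap]
  exact List.flatMap_congr fun a _ => leftComp_singleton_leftComp_singleton a v w hi hij hv

theorem leftComp_parallel_assoc_general (m i j : ℕ) (u v w : List ℕ)
    (hv : IsPackedOn m v) (h1 : 1 ≤ i) (hij : i < j) (hm : 1 ≤ m) :
    leftComp (leftComp u j w) i v = leftComp (leftComp u i v) (j + m - 1) w := by
  obtain rfl := hv.maxLetter_eq_s11
  exact leftComp_leftComp_of_lt u v w h1 hij hm

/-- Parallel (disjoint) associativity for the left composition of packed words. -/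
theorem leftComp_parallel_assoc (n m p i j : ℕ) (u v w : List ℕ)
    (hu : IsPackedOn n u) (hv : IsPackedOn m v) (hw : IsPackedOn p w)
    (h1 : 1 ≤ i) (hij : i < j) (hj : j ≤ n) (hm : 1 ≤ m) (hp : 1 ≤ p) :
    leftComp (leftComp u j w) i v = leftComp (leftComp u i v) (j + m - 1) w :=
  leftComp_parallel_assoc_general m i j u v w hv h1 hij hm
end

section
/- The one-letter packed word 1 is a two-sided unit for the left composition of packed words: for every packed word u with letter set {1,…,n} and every i ∈ {1,…,n}, u ∘←_i 1 = u, and for every packed word v, 1 ∘←_1 v = v. -/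
theorem maxLetter_singleton (a : ℕ) : maxLetter [a] = a := by
  simp [maxLetter]

theorem Inc_zero (β : ℕ) (u : List ℕ) : Inc 0 β u = u := by
  simp [Inc]

theorem Inc_singleton_of_lt {α β a : ℕ} (h : β < a) : Inc α β [a] = [a + α] := by
  simp [Inc, h]

theorem leftComp_singleton_one {i : ℕ} (hi : 1 ≤ i) (u : List ℕ) : leftComp u i [1] = u := by
  have hletter : ∀ a, (if a = i then Inc (i - 1) 0 [1]
      else [if i < a then a + (maxLetter [1] - 1) else a]) = [a] := by
    intro a
    rw [Inc_singleton_of_lt Nat.one_pos, maxLetter_singleton]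
    split_ifs <;> simp only [List.cons.injEq, and_true] <;> omega
  simp only [leftComp, hletter, List.flatMap_singleton']

theorem singleton_one_leftComp (v : List ℕ) : leftComp [1] 1 v = v := by
  simp [leftComp, Inc_zero]

/-- The one-letter packed word `1` is a two-sided unit for the left composition. -/
theorem leftComp_unit :
    (∀ (n : ℕ) (u : List ℕ), IsPackedOn n u → ∀ i ∈ Finset.Icc 1 n,
      leftComp u i [1] = u) ∧
    (∀ (m : ℕ) (v : List ℕ), IsPackedOn m v → 1 ≤ m → leftComp [1] 1 v = v) :=
  ⟨fun _ u _ _ hi => leftComp_singleton_one (Finset.mem_Icc.1 hi).1 u,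
    fun _ v _ _ => singleton_one_leftComp v⟩
end

section
/- For every k ≥ 1, the relation ≡_k is a congruence for the left composition of packed words: for packed words u, u' with letter set {1,…,n}, packed words v, v' with letter set {1,…,m}, and i ∈ {1,…,n}, if First_k(u) = First_k(u') and First_k(v) = First_k(v'), then First_k(u ∘←_i v) = First_k(u' ∘←_i v'). -/
/-- One-step rewriting relation on words: `u·a·b·v ↔ u·b·a·v` whenever `P u a b v` holds. -/
def StepRel (P : List ℕ → ℕ → ℕ → List ℕ → Prop) (x y : List ℕ) : Prop :=
  ∃ u a b v, P u a b v ∧ x = u ++ a :: b :: v ∧ y = u ++ b :: a :: v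

/-- `≡_P`: the reflexive, symmetric, transitive closure of the one-step relation. -/
def EquivP (P : List ℕ → ℕ → ℕ → List ℕ → Prop) : List ℕ → List ℕ → Prop :=
  Relation.EqvGen (StepRel P)

/-- `P` is compatible with subwords. -/
def SubwordCompat (P : List ℕ → ℕ → ℕ → List ℕ → Prop) : Prop :=
  ∀ u a b v u' v', P u a b v → u.Sublist u' → v.Sublist v' → P u' a b v'

/-- `P` is compatible with relabeling by strictly monotone maps of the positive integers. -/
def RelabelCompat (P : List ℕ → ℕ → ℕ → List ℕ → Prop) : Prop :=
  ∀ f : ℕ → ℕ, StrictMono f → (∀ x, 0 < x → 0 < f x) →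
    ∀ u a b v, P u a b v → P (u.map f) (f a) (f b) (v.map f)

/-- `P` is right-trivial. -/
def RightTrivial (P : List ℕ → ℕ → ℕ → List ℕ → Prop) : Prop :=
  ∀ u a b v, P u a b v → P u a b []

/-- Lexicographic order on words. -/
def LexLE (x y : List ℕ) : Prop := x = y ∨ List.Lex (· < ·) x y

/-!
`First k (x ++ y)` keeps from `y` the first `k - x.count a` occurrences of each letter `a`, and
`(First k x).count a = min (x.count a) k`; hence `≡_k` is a congruence of the free monoid. Left
composition is the monoid morphism `u ↦ u.flatMap g` with `g i` the shifted copy of `v` and `g a`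
a single relabelled letter otherwise, and every such morphism respects `≡_k`: an occurrence of `a`
erased by `First k` follows `k` occurrences of `a`, so every letter of the block `g a` it produces
has already been seen `k` times and is erased as well. Finally, `≡_k` is preserved by injective
relabellings such as `Inc`, and for `k ≥ 1` it preserves the set of letters, hence `maxLetter`.
-/

section First

variable {k : ℕ}

theorem first_append_singleton (x : List ℕ) (a : ℕ) :
    First k (x ++ [a]) = First k x ++ if x.count a < k then [a] else [] := by
  have hlt : ∀ p ∈ List.range x.length,
      (x ++ [a]).getD p 0 = x.getD p 0 ∧ (x ++ [a]).take p = x.take p := fun p hp => by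
    have hp := List.mem_range.mp hp
    exact ⟨List.getD_append _ _ _ _ hp, List.take_append_of_le_length hp.le⟩
  have hlast : (x ++ [a]).getD x.length 0 = a := by simp
  rw [First, List.length_append, List.length_singleton, List.range_succ, List.filterMap_append,
    List.filterMap_congr fun p hp => by rw [(hlt p hp).1, (hlt p hp).2], ← First,
    List.filterMap_cons, List.filterMap_nil, hlast, List.take_left' rfl]
  split_ifs <;> rfl

theorem count_first (x : List ℕ) (a : ℕ) : (First k x).count a = min (x.count a) k := by
  induction x using List.reverseRecOn with
  | nil => simp [First]
  | append_singleton x b ih =>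
    rw [first_append_singleton, List.count_append, ih, List.count_append]
    by_cases hba : b = a
    · subst hba; split_ifs <;> simp <;> omega
    · split_ifs <;> simp [hba]

theorem mem_first (hk : 0 < k) {x : List ℕ} {a : ℕ} : a ∈ First k x ↔ a ∈ x := by
  rw [← List.count_pos_iff, count_first, ← List.count_pos_iff]
  omega

theorem first_append_of_first_eq {x x' : List ℕ} (h : First k x = First k x') (y : List ℕ) :
    First k (x ++ y) = First k (x' ++ y) := by
  induction y using List.reverseRecOn with
  | nil => simpa
  | append_singleton y a ih =>
    have hcount : min (x.count a) k = min (x'.count a) k := by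
      rw [← count_first, ← count_first, h]
    have hlive : (x ++ y).count a < k ↔ (x' ++ y).count a < k := by
      simp only [List.count_append]; omega
    rw [← List.append_assoc, ← List.append_assoc, first_append_singleton, first_append_singleton,
      ih, if_congr hlive rfl rfl]

theorem first_append_first_right (x y : List ℕ) : First k (x ++ First k y) = First k (x ++ y) := by
  induction y using List.reverseRecOn with
  | nil => simp [First]
  | append_singleton y a ih =>
    rw [← List.append_assoc, first_append_singleton (x ++ y)]
    by_cases ha : y.count a < k
    · rw [first_append_singleton y, if_pos ha, ← List.append_assoc, first_append_singleton, ih,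
        List.count_append, List.count_append, count_first, min_eq_left ha.le]
    · rw [first_append_singleton y, if_neg ha, List.append_nil, ih, List.count_append,
        if_neg (by omega), List.append_nil]

theorem first_append_congr {x x' y y' : List ℕ} (hx : First k x = First k x')
    (hy : First k y = First k y') : First k (x ++ y) = First k (x' ++ y') := by
  rw [← first_append_first_right x, hy, first_append_first_right,
    first_append_of_first_eq hx]

theorem first_append_of_le_count {x z : List ℕ} (hz : ∀ a ∈ z, k ≤ x.count a) :
    First k (x ++ z) = First k x := by
  induction z using List.reverseRecOn with
  | nil => simp
  | append_singleton z a ih =>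
    have hdead : ¬ (x ++ z).count a < k := by
      have := hz a (by simp)
      rw [List.count_append]; omega
    rw [← List.append_assoc, first_append_singleton, if_neg hdead, List.append_nil,
      ih fun b hb => hz b (by simp [hb])]

theorem first_map {f : ℕ → ℕ} (hf : Function.Injective f) (x : List ℕ) :
    First k (x.map f) = (First k x).map f := by
  induction x using List.reverseRecOn with
  | nil => simp [First]
  | append_singleton x a ih =>
    rw [List.map_append, List.map_singleton, first_append_singleton, first_append_singleton, ih,
      List.count_map_of_injective _ _ hf, List.map_append]
    split_ifs <;> rfl

theorem count_le_count_flatMap (g : ℕ → List ℕ) (x : List ℕ) {a b : ℕ} (hb : b ∈ g a) :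
    x.count a ≤ (x.flatMap g).count b := by
  induction x with
  | nil => simp
  | cons c x ih =>
    have hpos : 0 < (g a).count b := List.count_pos_iff.mpr hb
    rw [List.flatMap_cons, List.count_append, List.count_cons]
    split_ifs with hca
    · simp only [beq_iff_eq] at hca; subst hca; omega
    · omega

theorem first_flatMap_first (g : ℕ → List ℕ) (x : List ℕ) :
    First k ((First k x).flatMap g) = First k (x.flatMap g) := by
  induction x using List.reverseRecOn with
  | nil => simp [First]
  | append_singleton x a ih =>
    rw [first_append_singleton, List.flatMap_append, List.flatMap_append, List.flatMap_singleton]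
    split_ifs with ha
    · rw [List.flatMap_singleton, first_append_congr ih rfl]
    · rw [List.flatMap_nil, List.append_nil, ih, first_append_of_le_count fun b hb =>
        (not_lt.mp ha).trans (count_le_count_flatMap g x hb)]

theorem first_flatMap_congr {x x' : List ℕ} (hx : First k x = First k x') {g g' : ℕ → List ℕ}
    (hg : ∀ a, First k (g a) = First k (g' a)) :
    First k (x.flatMap g) = First k (x'.flatMap g') := by
  have hblocks : ∀ y : List ℕ, First k (y.flatMap g) = First k (y.flatMap g') := by
    intro y
    induction y with
    | nil => rfl
    | cons a y ih => rw [List.flatMap_cons, List.flatMap_cons, first_append_congr (hg a) ih]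
  rw [← first_flatMap_first, hx, first_flatMap_first, hblocks]

theorem first_Inc (α β : ℕ) (x : List ℕ) : First k (Inc α β x) = Inc α β (First k x) :=
  first_map (fun a b hab => by split_ifs at hab <;> omega) x

end First

theorem maxLetter_le_iff {v : List ℕ} {b : ℕ} : maxLetter v ≤ b ↔ ∀ a ∈ v, a ≤ b := by
  induction v with
  | nil => simp [maxLetter]
  | cons c v ih => simp [maxLetter, ← ih]

theorem maxLetter_congr {v v' : List ℕ} (h : ∀ a, a ∈ v ↔ a ∈ v') :
    maxLetter v = maxLetter v' :=
  le_antisymm (maxLetter_le_iff.mpr fun a ha => maxLetter_le_iff.mp le_rfl a ((h a).mp ha))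
    (maxLetter_le_iff.mpr fun a ha => maxLetter_le_iff.mp le_rfl a ((h a).mpr ha))

theorem first_leftComp_congruence_general (k : ℕ) (hk : 1 ≤ k) (i : ℕ)
    (u u' v v' : List ℕ)
    (h1 : First k u = First k u') (h2 : First k v = First k v') :
    First k (leftComp u i v) = First k (leftComp u' i v') := by
  have hmax : maxLetter v = maxLetter v' :=
    maxLetter_congr fun a => by rw [← mem_first hk, h2, mem_first hk]
  have hblock : First k (Inc (i - 1) 0 v) = First k (Inc (i - 1) 0 v') := by
    rw [first_Inc, h2, first_Inc]
  rw [leftComp, leftComp, hmax]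
  refine first_flatMap_congr h1 fun a => ?_
  split_ifs
  exacts [hblock, rfl, rfl]

/-- For every `k ≥ 1`, the relation `≡_k` (equality of the `First_k` projections) is a
congruence for the left composition of packed words. -/
theorem first_leftComp_congruence (k : ℕ) (hk : 1 ≤ k) (n m i : ℕ)
    (u u' v v' : List ℕ)
    (hu : IsPackedOn n u) (hu' : IsPackedOn n u')
    (hv : IsPackedOn m v) (hv' : IsPackedOn m v')
    (hi : i ∈ Finset.Icc 1 n) (hm : 1 ≤ m)
    (h1 : First k u = First k u') (h2 : First k v = First k v') :
    First k (leftComp u i v) = First k (leftComp u' i v') :=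
  first_leftComp_congruence_general k hk i u u' v v' h1 h2
end
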